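/- Let K = ℚ(√3) and t = 3 + 3√3 ∈ K. Then the Weierstrass curves C_{9,1}(t,1) and C_{9,3}(t,1) over K have nonzero discriminants, their discriminants satisfy 3¹²·Δ(C_{9,1}(t,1)) = Δ(C_{9,3}(t,1)), their j-invariants are equal, and yet there is no change of variables (x,y) ↦ (u²x + r, u³y + su²x + w) with u ∈ K^×, r, s, w ∈ K transforming C_{9,1}(t,1) into C_{9,3}(t,1); that is, C_{9,1}(t,1) and C_{9,3}(t,1) are not isomorphic over K. -/

import Mathlib

/-!
At `t = 3 + 3√3` the curve `C_{9,3}(t,1)` is the quadratic twist of `C_{9,1}(t,1)` by `-9`: its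
coefficients are `a₄' = 81 a₄` and `a₆' = -729 a₆`. Twisting multiplies `c₄` by `c²` and `Δ` by `c⁶`,
so the discriminants differ by `9⁶ = 3¹²` and the `j`-invariants agree. A change of variables between
two short Weierstrass equations in characteristic `≠ 2, 3` is a pure scaling, which multiplies `a₆` by
`u⁻⁶`; as `a₆ ≠ 0`, an isomorphism to the twist by `c` forces `c` to be a square. But `-9` is not a
square in `ℚ(√3)`, since `(a + b√3)² = a² + 3b² + 2ab√3` has non-negative rational part.
-/

noncomputable section

/-- The curve `C_{9,1}(t,d)`. -/
def C91 {K : Type*} [Field K] (t d : K) : WeierstrassCurve K :=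
  { a₁ := 0, a₂ := 0, a₃ := 0,
    a₄ := -3 * d ^ 2 * (t + 6) * (t ^ 3 + 234 * t ^ 2 + 756 * t + 2160),
    a₆ := -2 * d ^ 3 * (t ^ 6 - 504 * t ^ 5 - 16632 * t ^ 4 - 123012 * t ^ 3 - 517104 * t ^ 2 - 1143072 * t - 1475496) }

/-- The curve `C_{9,3}(t,d)`. -/
def C93 {K : Type*} [Field K] (t d : K) : WeierstrassCurve K :=
  { a₁ := 0, a₂ := 0, a₃ := 0,
    a₄ := -19683 * d ^ 2 * t * (t ^ 3 - 24),
    a₆ := -1062882 * d ^ 3 * (t ^ 6 - 36 * t ^ 3 + 216) }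

namespace WeierstrassCurve

section QuadraticTwist

variable {R : Type*} [CommRing R]

/-- The quadratic twist `Y² = X³ + c²a₄X + c³a₆`; it discards `a₁, a₂, a₃`, so it is the twist of
`W` only when `W` is in short normal form. -/
def quadraticTwist (W : WeierstrassCurve R) (c : R) : WeierstrassCurve R :=
  { a₁ := 0, a₂ := 0, a₃ := 0, a₄ := c ^ 2 * W.a₄, a₆ := c ^ 3 * W.a₆ }

instance (W : WeierstrassCurve R) (c : R) : (W.quadraticTwist c).IsShortNF := ⟨rfl, rfl, rfl⟩

variable (W : WeierstrassCurve R) [W.IsShortNF] (c : R)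

theorem c₄_quadraticTwist : (W.quadraticTwist c).c₄ = c ^ 2 * W.c₄ := by
  rw [c₄_of_isShortNF, c₄_of_isShortNF, quadraticTwist]
  ring

theorem Δ_quadraticTwist : (W.quadraticTwist c).Δ = c ^ 6 * W.Δ := by
  rw [Δ_of_isShortNF, Δ_of_isShortNF, quadraticTwist]
  ring

end QuadraticTwist

variable {K : Type*} [Field K]

theorem c₄_pow_three_div_Δ_quadraticTwist (W : WeierstrassCurve K) [W.IsShortNF] {c : K}
    (hc : c ≠ 0) :
    (W.quadraticTwist c).c₄ ^ 3 / (W.quadraticTwist c).Δ = W.c₄ ^ 3 / W.Δ := by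
  rw [c₄_quadraticTwist, Δ_quadraticTwist, mul_pow, ← pow_mul,
    mul_div_mul_left _ _ (pow_ne_zero _ hc)]

theorem a₆_variableChange_of_isShortNF (h2 : (2 : K) ≠ 0) (h3 : (3 : K) ≠ 0)
    (C : VariableChange K) (W : WeierstrassCurve K) [W.IsShortNF] [(C • W).IsShortNF] :
    (C • W).a₆ = (C.u⁻¹ : Kˣ) ^ 6 * W.a₆ := by
  have hs : C.s = 0 := by
    have h := a₁_of_isShortNF (C • W)
    rw [variableChange_a₁, a₁_of_isShortNF] at h
    simpa [h2] using h
  have hr : C.r = 0 := by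
    have h := a₂_of_isShortNF (C • W)
    rw [variableChange_a₂, a₁_of_isShortNF, a₂_of_isShortNF, hs] at h
    simpa [h3] using h
  have ht : C.t = 0 := by
    have h := a₃_of_isShortNF (C • W)
    rw [variableChange_a₃, a₁_of_isShortNF, a₃_of_isShortNF, hr] at h
    simpa [h2] using h
  rw [variableChange_a₆, hr, ht, a₃_of_isShortNF]
  ring

/-- An isomorphism onto the twist by `c` scales `a₆` by `u⁻⁶ = c³`, whence `c = (c² u³)²`. -/
theorem isSquare_of_variableChange_eq_quadraticTwist (h2 : (2 : K) ≠ 0) (h3 : (3 : K) ≠ 0)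
    {W : WeierstrassCurve K} [W.IsShortNF] (ha₆ : W.a₆ ≠ 0) {c : K} {C : VariableChange K}
    (hC : C • W = W.quadraticTwist c) : IsSquare c := by
  have : (C • W).IsShortNF := hC ▸ inferInstance
  have hu : ((C.u : K)⁻¹) ^ 6 = c ^ 3 := by
    have h := a₆_variableChange_of_isShortNF h2 h3 C W
    rw [hC, quadraticTwist, Units.val_inv_eq_inv_val] at h
    exact (mul_right_cancel₀ ha₆ h).symm
  refine ⟨c ^ 2 * (C.u : K) ^ 3, ?_⟩
  field_simp at hu
  linear_combination c * hu

end WeierstrassCurve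

section QuadraticField

variable {K : Type*} [Field K] [CharZero K] {d : ℚ} {s : K}

theorem ratCast_add_ratCast_mul_ne_zero (hs : s ^ 2 = d) (hd : ¬IsSquare d) {a : ℚ} (ha : a ≠ 0)
    (b : ℚ) : (a : K) + b * s ≠ 0 := by
  intro h
  by_cases hb : b = 0
  · subst hb
    exact ha (by simpa using h)
  · refine hd ⟨-a / b, ?_⟩
    have hbK : (b : K) ≠ 0 := by exact_mod_cast hb
    have hsab : s = ((-a / b : ℚ) : K) := by
      push_cast
      field_simp
      linear_combination h
    exact_mod_cast (hs.symm.trans (by rw [hsab, sq])).trans (Rat.cast_mul _ _).symm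

theorem not_isSquare_neg_ratCast (hs : s ^ 2 = d) (hd : ¬IsSquare d) (hd₀ : 0 ≤ d)
    (hgen : ∀ x : K, ∃ a b : ℚ, x = (a : K) + (b : K) * s) {q : ℚ} (hq : 0 < q) :
    ¬IsSquare (-(q : K)) := by
  rintro ⟨x, hx⟩
  obtain ⟨a, b, rfl⟩ := hgen x
  refine ratCast_add_ratCast_mul_ne_zero hs hd (a := a ^ 2 + d * b ^ 2 + q) (by positivity)
    (2 * a * b) ?_
  push_cast
  linear_combination -hx - (b : K) ^ 2 * hs

end QuadraticField

section NineTorsionFamilies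

variable {K : Type*} [Field K]

instance (t d : K) : (C91 t d).IsShortNF := ⟨rfl, rfl, rfl⟩

theorem Δ_C91 (t d : K) :
    (C91 t d).Δ = 12 ^ 6 * d ^ 6 * (t - 3) ^ 9 * (t ^ 2 + 3 * t + 9) := by
  rw [WeierstrassCurve.Δ_of_isShortNF, C91]
  ring

variable {s : K} (hs : s ^ 2 = 3)
include hs

theorem C93_eq_quadraticTwist_C91 (d : K) :
    C93 (3 + 3 * s) d = (C91 (3 + 3 * s) d).quadraticTwist (-9) := by
  rw [C91, C93, WeierstrassCurve.quadraticTwist, WeierstrassCurve.mk.injEq]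
  refine ⟨rfl, rfl, rfl, ?_, ?_⟩
  · linear_combination -1574640 * d ^ 2 * (3 + 3 * s + s ^ 2) * hs
  · linear_combination d ^ 3 * (-6983134740 - 13430576952 * s - 11109242664 * s ^ 2
      - 4476858984 * s ^ 3 - 775903860 * s ^ 4) * hs

theorem a₆_C91 : (C91 (3 + 3 * s) 1).a₆ = 207222624 + 119042784 * s := by
  rw [C91]
  linear_combination (59508270 + 20549052 * s + 3892860 * s ^ 2 + 236196 * s ^ 3
    - 1458 * s ^ 4) * hs

end NineTorsionFamilies

section NineTorsionFamiliesCharZero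

variable {K : Type*} [Field K] [CharZero K] {s : K} (hs : s ^ 2 = 3)
include hs

theorem Δ_C91_ne_zero : (C91 (3 + 3 * s) 1).Δ ≠ 0 := by
  have hs₀ : s ≠ 0 := by
    rintro rfl
    norm_num at hs
  have h2 : (2 : K) + s ≠ 0 := by
    have hs' : s ^ 2 = ((3 : ℚ) : K) := by exact_mod_cast hs
    simpa using ratCast_add_ratCast_mul_ne_zero hs' (by norm_num) (two_ne_zero' ℚ) 1
  rw [Δ_C91, show (3 + 3 * s) ^ 2 + 3 * (3 + 3 * s) + 9 = 27 * (2 + s) by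
    linear_combination 9 * hs]
  simp [hs₀, h2]

theorem a₆_C91_ne_zero : (C91 (3 + 3 * s) 1).a₆ ≠ 0 := by
  rw [a₆_C91 hs]
  exact_mod_cast ratCast_add_ratCast_mul_ne_zero (d := 3) (by exact_mod_cast hs) (by norm_num)
    (by norm_num : (207222624 : ℚ) ≠ 0) 119042784

end NineTorsionFamiliesCharZero

theorem stmt13 {K : Type*} [Field K] [CharZero K] (s : K) (hs : s ^ 2 = 3)
    (hgen : ∀ x : K, ∃ a b : ℚ, x = (a : K) + (b : K) * s) :
    (C91 (3 + 3 * s) 1).Δ ≠ 0 ∧ (C93 (3 + 3 * s) 1).Δ ≠ 0 ∧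
    3 ^ 12 * (C91 (3 + 3 * s) 1).Δ = (C93 (3 + 3 * s) 1).Δ ∧
    (C91 (3 + 3 * s) 1).c₄ ^ 3 / (C91 (3 + 3 * s) 1).Δ =
      (C93 (3 + 3 * s) 1).c₄ ^ 3 / (C93 (3 + 3 * s) 1).Δ ∧
    ¬ ∃ C : WeierstrassCurve.VariableChange K,
        C • (C91 (3 + 3 * s) 1) = C93 (3 + 3 * s) 1 := by
  rw [C93_eq_quadraticTwist_C91 hs,
    WeierstrassCurve.c₄_pow_three_div_Δ_quadraticTwist _ (by norm_num),
    WeierstrassCurve.Δ_quadraticTwist]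
  refine ⟨Δ_C91_ne_zero hs, mul_ne_zero (by norm_num) (Δ_C91_ne_zero hs), by norm_num, rfl, ?_⟩
  rintro ⟨C, hC⟩
  have hsq := WeierstrassCurve.isSquare_of_variableChange_eq_quadraticTwist two_ne_zero
    three_ne_zero (a₆_C91_ne_zero hs) hC
  exact not_isSquare_neg_ratCast (d := 3) (by exact_mod_cast hs) (by norm_num) (by norm_num) hgen
    (q := 9) (by norm_num) (by exact_mod_cast hsq)
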